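/- arXiv:2603.07112 — 7 statements merged into one kernel-verified Lean document; each statement's English description precedes it below -/
import Mathlib

section
/- Let f be a polynomial in n variables over ℂ whose Jacobian algebra Q_f is finite-dimensional, and let p₁, …, p_μ be monomials whose residues form a ℂ-basis of Q_f. Let F = f ⊕ f be the polynomial f(x₁,…,xₙ) + f(y₁,…,yₙ) in 2n variables. Then the residues of the μ² monomials pᵢ(x)·pⱼ(y), 1 ≤ i, j ≤ μ, form a ℂ-basis of the Jacobian algebra Q_F of F. -/
/-! The partial derivatives of `g(x) + h(y)` are those of `g` in the `x`-variables and those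
of `h` in the `y`-variables, so the Jacobian ideal of `g ⊕ h` is generated by the images of `J_g`
and `J_h`, and `x ↦ x ⊗ 1`, `y ↦ 1 ⊗ y` induce an isomorphism `Q_{g ⊕ h} ≅ Q_g ⊗_ℂ Q_h`. The
tensor product of two bases is a basis, and the isomorphism `Q_g ⊗_ℂ Q_h → Q_{g ⊕ h}` carries
`pᵢ ⊗ pⱼ` to the residue of `pᵢ(x)·pⱼ(y)`. -/

open MvPolynomial

/-- The Jacobian ideal of a multivariate polynomial: the ideal generated by its
partial derivatives. -/
noncomputable def jacobianIdeal {σ : Type*} (f : MvPolynomial σ ℂ) :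
    Ideal (MvPolynomial σ ℂ) :=
  Ideal.span (Set.range fun i : σ => MvPolynomial.pderiv i f)

/-- `f ⊕ f`: the polynomial `f(x₁,…,xₙ) + f(y₁,…,yₙ)` in `2n` variables. -/
noncomputable def doubling {n : ℕ} (f : MvPolynomial (Fin n) ℂ) :
    MvPolynomial (Fin n ⊕ Fin n) ℂ :=
  rename Sum.inl f + rename Sum.inr f

open TensorProduct

theorem MvPolynomial.pderiv_rename_of_notMem_range {R σ τ : Type*} [CommSemiring R]
    {k : σ → τ} {j : τ} (hj : j ∉ Set.range k) (p : MvPolynomial σ R) :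
    pderiv j (rename k p) = 0 := by
  refine pderiv_eq_zero_of_notMem_vars fun hmem => hj ?_
  obtain ⟨i, -, rfl⟩ := mem_vars_rename k p hmem
  exact ⟨i, rfl⟩

section ThomSebastiani

variable {σ τ : Type*} (g : MvPolynomial σ ℂ) (h : MvPolynomial τ ℂ)

noncomputable def thomSebastianiSum : MvPolynomial (σ ⊕ τ) ℂ :=
  rename Sum.inl g + rename Sum.inr h

theorem doubling_eq_thomSebastianiSum {n : ℕ} (f : MvPolynomial (Fin n) ℂ) :
    doubling f = thomSebastianiSum f f := rfl

theorem pderiv_inl_thomSebastianiSum (i : σ) :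
    pderiv (Sum.inl i) (thomSebastianiSum g h) = rename Sum.inl (pderiv i g) := by
  rw [thomSebastianiSum, map_add, pderiv_rename Sum.inl_injective,
    pderiv_rename_of_notMem_range (by simp), add_zero]

theorem pderiv_inr_thomSebastianiSum (j : τ) :
    pderiv (Sum.inr j) (thomSebastianiSum g h) = rename Sum.inr (pderiv j h) := by
  rw [thomSebastianiSum, map_add, pderiv_rename Sum.inr_injective,
    pderiv_rename_of_notMem_range (by simp), zero_add]

theorem jacobianIdeal_thomSebastianiSum :
    jacobianIdeal (thomSebastianiSum g h) =
      (jacobianIdeal g).map (rename Sum.inl) ⊔ (jacobianIdeal h).map (rename Sum.inr) := by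
  have hrange : (Set.range fun k : σ ⊕ τ => pderiv k (thomSebastianiSum g h)) =
      rename Sum.inl '' Set.range (fun i => pderiv i g) ∪
        rename Sum.inr '' Set.range (fun j => pderiv j h) := by
    rw [← Set.range_comp, ← Set.range_comp, ← Set.Sum.elim_range]
    congr 1
    ext (i | j) <;> simp [pderiv_inl_thomSebastianiSum, pderiv_inr_thomSebastianiSum]
  rw [jacobianIdeal, hrange, Ideal.span_union, jacobianIdeal, jacobianIdeal, Ideal.map_span,
    Ideal.map_span]

abbrev JacobianAlgebra (g : MvPolynomial σ ℂ) := MvPolynomial σ ℂ ⧸ jacobianIdeal g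

namespace JacobianAlgebra

noncomputable def inl : JacobianAlgebra g →ₐ[ℂ] JacobianAlgebra (thomSebastianiSum g h) :=
  Ideal.quotientMapₐ _ (rename Sum.inl) <| Ideal.map_le_iff_le_comap.1 <|
    jacobianIdeal_thomSebastianiSum g h ▸ le_sup_left

noncomputable def inr : JacobianAlgebra h →ₐ[ℂ] JacobianAlgebra (thomSebastianiSum g h) :=
  Ideal.quotientMapₐ _ (rename Sum.inr) <| Ideal.map_le_iff_le_comap.1 <|
    jacobianIdeal_thomSebastianiSum g h ▸ le_sup_right

variable {g h}

@[simp] theorem inl_mk (a : MvPolynomial σ ℂ) :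
    inl g h (Ideal.Quotient.mk _ a) = Ideal.Quotient.mk _ (rename Sum.inl a) := rfl

@[simp] theorem inr_mk (a : MvPolynomial τ ℂ) :
    inr g h (Ideal.Quotient.mk _ a) = Ideal.Quotient.mk _ (rename Sum.inr a) := rfl

variable (g h)

noncomputable def tensorToThomSebastianiSum :
    JacobianAlgebra g ⊗[ℂ] JacobianAlgebra h →ₐ[ℂ] JacobianAlgebra (thomSebastianiSum g h) :=
  Algebra.TensorProduct.lift (inl g h) (inr g h) fun _ _ => .all _ _

@[simp] theorem tensorToThomSebastianiSum_tmul (x : JacobianAlgebra g) (y : JacobianAlgebra h) :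
    tensorToThomSebastianiSum g h (x ⊗ₜ y) = inl g h x * inr g h y :=
  Algebra.TensorProduct.lift_tmul _ _ _ _ _

noncomputable def evalTensor :
    MvPolynomial (σ ⊕ τ) ℂ →ₐ[ℂ] JacobianAlgebra g ⊗[ℂ] JacobianAlgebra h :=
  aeval <| Sum.elim
    (Algebra.TensorProduct.includeLeft.comp (Ideal.Quotient.mkₐ ℂ (jacobianIdeal g)) ∘ X)
    (Algebra.TensorProduct.includeRight.comp (Ideal.Quotient.mkₐ ℂ (jacobianIdeal h)) ∘ X)

theorem evalTensor_rename_inl (a : MvPolynomial σ ℂ) :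
    evalTensor g h (rename Sum.inl a) = Ideal.Quotient.mk _ a ⊗ₜ 1 := by
  rw [evalTensor, aeval_rename, Sum.elim_comp_inl, ← aeval_unique]
  rfl

theorem evalTensor_rename_inr (a : MvPolynomial τ ℂ) :
    evalTensor g h (rename Sum.inr a) = 1 ⊗ₜ Ideal.Quotient.mk _ a := by
  rw [evalTensor, aeval_rename, Sum.elim_comp_inr, ← aeval_unique]
  rfl

theorem jacobianIdeal_thomSebastianiSum_le_ker_evalTensor :
    jacobianIdeal (thomSebastianiSum g h) ≤ RingHom.ker (evalTensor g h) := by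
  rw [jacobianIdeal_thomSebastianiSum, sup_le_iff, Ideal.map_le_iff_le_comap,
    Ideal.map_le_iff_le_comap]
  constructor
  · intro a ha
    simp [evalTensor_rename_inl, Ideal.Quotient.eq_zero_iff_mem.2 ha]
  · intro a ha
    simp [evalTensor_rename_inr, Ideal.Quotient.eq_zero_iff_mem.2 ha]

noncomputable def thomSebastianiSumToTensor :
    JacobianAlgebra (thomSebastianiSum g h) →ₐ[ℂ] JacobianAlgebra g ⊗[ℂ] JacobianAlgebra h :=
  Ideal.Quotient.liftₐ _ (evalTensor g h) fun _ ha =>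
    jacobianIdeal_thomSebastianiSum_le_ker_evalTensor g h ha

@[simp] theorem thomSebastianiSumToTensor_mk (a : MvPolynomial (σ ⊕ τ) ℂ) :
    thomSebastianiSumToTensor g h (Ideal.Quotient.mk _ a) = evalTensor g h a := rfl

noncomputable def tensorEquivThomSebastianiSum :
    JacobianAlgebra g ⊗[ℂ] JacobianAlgebra h ≃ₐ[ℂ] JacobianAlgebra (thomSebastianiSum g h) :=
  AlgEquiv.ofAlgHom (tensorToThomSebastianiSum g h) (thomSebastianiSumToTensor g h)
    (by
      apply Ideal.Quotient.algHom_ext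
      apply MvPolynomial.algHom_ext
      rintro (i | j) <;> simp [evalTensor])
    (by
      apply Algebra.TensorProduct.ext <;> apply Ideal.Quotient.algHom_ext <;>
        apply MvPolynomial.algHom_ext <;> intro i <;> simp [evalTensor])

variable {g h}

noncomputable def basisThomSebastianiSum {ι κ : Type*} (b : Module.Basis ι ℂ (JacobianAlgebra g))
    (c : Module.Basis κ ℂ (JacobianAlgebra h)) :
    Module.Basis (ι × κ) ℂ (JacobianAlgebra (thomSebastianiSum g h)) :=
  (b.tensorProduct c).map (tensorEquivThomSebastianiSum g h).toLinearEquiv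

@[simp] theorem basisThomSebastianiSum_apply {ι κ : Type*}
    (b : Module.Basis ι ℂ (JacobianAlgebra g)) (c : Module.Basis κ ℂ (JacobianAlgebra h))
    (ij : ι × κ) :
    basisThomSebastianiSum b c ij = inl g h (b ij.1) * inr g h (c ij.2) := by
  simp [basisThomSebastianiSum, tensorEquivThomSebastianiSum, Module.Basis.tensorProduct_apply']

end JacobianAlgebra

end ThomSebastiani

theorem monomial_basis_of_doubling_general {n μ : ℕ} (f : MvPolynomial (Fin n) ℂ)
    (p : Fin μ → MvPolynomial (Fin n) ℂ)
    (b : Module.Basis (Fin μ) ℂ (MvPolynomial (Fin n) ℂ ⧸ jacobianIdeal f))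
    (hb : ∀ i, b i = Ideal.Quotient.mk (jacobianIdeal f) (p i)) :
    ∃ B : Module.Basis (Fin μ × Fin μ) ℂ
        (MvPolynomial (Fin n ⊕ Fin n) ℂ ⧸ jacobianIdeal (doubling f)),
      ∀ ij : Fin μ × Fin μ,
        B ij = Ideal.Quotient.mk (jacobianIdeal (doubling f))
          (rename (Sum.inl : Fin n → Fin n ⊕ Fin n) (p ij.1) *
            rename (Sum.inr : Fin n → Fin n ⊕ Fin n) (p ij.2)) := by
  rw [doubling_eq_thomSebastianiSum]
  refine ⟨JacobianAlgebra.basisThomSebastianiSum b b, fun ij => ?_⟩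
  rw [JacobianAlgebra.basisThomSebastianiSum_apply, hb, hb, JacobianAlgebra.inl_mk,
    JacobianAlgebra.inr_mk, map_mul]

/-- If `p₁, …, p_μ` are monomials whose residues form a `ℂ`-basis of the Jacobian
algebra `Q_f`, then the residues of the `μ²` monomials `pᵢ(x)·pⱼ(y)` form a
`ℂ`-basis of the Jacobian algebra of `f ⊕ f`. -/
theorem monomial_basis_of_doubling {n μ : ℕ} (f : MvPolynomial (Fin n) ℂ)
    (hfd : FiniteDimensional ℂ (MvPolynomial (Fin n) ℂ ⧸ jacobianIdeal f))
    (p : Fin μ → MvPolynomial (Fin n) ℂ)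
    (hmon : ∀ i, ∃ d : Fin n →₀ ℕ, p i = monomial d 1)
    (b : Module.Basis (Fin μ) ℂ (MvPolynomial (Fin n) ℂ ⧸ jacobianIdeal f))
    (hb : ∀ i, b i = Ideal.Quotient.mk (jacobianIdeal f) (p i)) :
    ∃ B : Module.Basis (Fin μ × Fin μ) ℂ
        (MvPolynomial (Fin n ⊕ Fin n) ℂ ⧸ jacobianIdeal (doubling f)),
      ∀ ij : Fin μ × Fin μ,
        B ij = Ideal.Quotient.mk (jacobianIdeal (doubling f))
          (rename (Sum.inl : Fin n → Fin n ⊕ Fin n) (p ij.1) *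
            rename (Sum.inr : Fin n → Fin n ⊕ Fin n) (p ij.2)) :=
  monomial_basis_of_doubling_general f p b hb
end

section
/- Let p be a prime, ζ ∈ ℂ a primitive p-th root of unity, w : Fin n → ZMod p a weight function, and σ the ℂ-algebra automorphism of MvPolynomial (Fin n) ℂ with σ(Xᵢ) = ζ^{wᵢ}·Xᵢ. Let f be a polynomial with σ(f) = f and with finite-dimensional Jacobian algebra Q_f; σ maps the Jacobian ideal J_f to itself and hence induces a ℂ-linear automorphism σ̄ of Q_f. Let τ be the ℂ-algebra automorphism of MvPolynomial (Fin n ⊕ Fin n) ℂ with τ(X_{inl i}) = ζ^{wᵢ}·X_{inl i} and τ(X_{inr i}) = ζ^{-wᵢ}·X_{inr i}; then τ fixes F = f ⊕ f, preserves J_F, and induces τ̄ on Q_F. The dimension of the fixed subspace of τ̄ on Q_F equals the sum over k ∈ ZMod p of the squares of the dimensions of the eigenspaces of σ̄ on Q_f for the eigenvalues ζ^k: dim (Q_F)^{τ̄} = Σ_k (dim ker(σ̄ − ζ^k·id))². -/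
/-!
The Jacobian ideal of `F = f(x) + f(y)` is generated by the `∂f/∂xᵢ` and the `∂f/∂yᵢ`, so
`Q_F ≅ Q_f ⊗ Q_f`, and since `τ` scales the `y`-variables by the inverse weights, `τ̄` becomes
`σ̄ ⊗ σ̄⁻¹` under this isomorphism. As `σ̄ ^ p = 1` and `X ^ p - 1` is separable, `σ̄` is
diagonalizable with eigenvalues `ζ ^ k`. In a product basis `bᵢ ⊗ bⱼ` of eigenvectors the
eigenvalue `ζ ^ (kᵢ - kⱼ)` of `σ̄ ⊗ σ̄⁻¹` is `1` exactly when `kᵢ = kⱼ`, and counting these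
pairs gives `∑ₖ (dim ker (σ̄ - ζ ^ k))²`.
-/

open MvPolynomial

open Module Finset TensorProduct

theorem IsPrimitiveRoot.pow_val_injective {K : Type*} [CommRing K] [IsDomain K] {p : ℕ}
    [NeZero p] {ζ : K} (hζ : IsPrimitiveRoot ζ p) :
    Function.Injective fun k : ZMod p => ζ ^ k.val :=
  fun a b hab => ZMod.val_injective p (hζ.pow_inj (ZMod.val_lt a) (ZMod.val_lt b) hab)

theorem IsPrimitiveRoot.pow_neg_val {K : Type*} [Field K] {p : ℕ} [NeZero p] {ζ : K}
    (hζ : IsPrimitiveRoot ζ p) (a : ZMod p) : ζ ^ (-a).val = (ζ ^ a.val)⁻¹ := by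
  refine eq_inv_of_mul_eq_one_left ?_
  rw [← pow_add, hζ.pow_eq_one_iff_dvd, ← ZMod.natCast_eq_zero_iff]
  push_cast [ZMod.natCast_val, ZMod.cast_id]
  ring

theorem card_filter_eq_sum_sq {ι κ : Type*} [Fintype ι] [Fintype κ] [DecidableEq κ]
    (g : ι → κ) : #{z : ι × ι | g z.1 = g z.2} = ∑ k, #{i | g i = k} ^ 2 := by
  rw [card_eq_sum_card_fiberwise (f := fun z => g z.1) fun _ _ => mem_univ _]
  refine sum_congr rfl fun k _ => ?_
  rw [sq, ← card_product, filter_filter, ← filter_product, univ_product_univ]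
  congr 1
  ext z
  simp only [mem_filter, mem_univ, true_and]
  grind

section LinearAlgebra

variable {K V : Type*} [Field K] [AddCommGroup V] [Module K V]

theorem finrank_ker_sub_smul_id_of_basis {ι : Type*} [Fintype ι] (b : Basis ι K V)
    {U : V →ₗ[K] V} {μ : ι → K} (hU : ∀ i, U (b i) = μ i • b i) (c : K)
    [DecidablePred fun i => μ i = c] :
    finrank K (LinearMap.ker (U - c • LinearMap.id)) = #{i | μ i = c} := by
  have hcoord : ∀ v i, b.repr (U v) i = μ i * b.repr v i := fun v i =>
    LinearMap.congr_fun (b.ext (f₁ := (b.coord i) ∘ₗ U) (f₂ := μ i • b.coord i) fun j => by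
      rcases eq_or_ne i j with rfl | hij
      · simp [hU]
      · simp [hU, Finsupp.single_eq_of_ne hij]) v
  have hker : LinearMap.ker (U - c • LinearMap.id) =
      Submodule.span K (b '' ↑({i | μ i = c} : Finset ι)) := by
    ext v
    rw [b.mem_span_image, LinearMap.mem_ker, LinearMap.sub_apply, sub_eq_zero, b.ext_elem_iff]
    simp only [LinearMap.smul_apply, LinearMap.id_apply, hcoord, map_smul, Finsupp.smul_apply,
      smul_eq_mul, Set.subset_def, Finset.mem_coe, Finsupp.mem_support_iff, mem_filter, mem_univ,
      true_and]
    exact forall_congr' fun i => by rw [mul_eq_mul_right_iff]; tauto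
  rw [hker, Set.image_eq_range, finrank_span_eq_card]
  · simp
  · exact b.linearIndependent.comp _ Subtype.val_injective

variable [IsAlgClosed K] [FiniteDimensional K V] {p : ℕ} [NeZero p] {ζ : K}

theorem Module.End.exists_basis_apply_eq_pow_smul_of_pow_eq_one
    (hζ : IsPrimitiveRoot ζ p) {U : Module.End K V} (hU : U ^ p = 1) :
    ∃ (ι : Type) (_ : Fintype ι) (b : Basis ι K V) (κ : ι → ZMod p),
      ∀ i, U (b i) = ζ ^ (κ i).val • b i := by
  have hss : U.IsSemisimple := by
    refine isSemisimple_of_squarefree_aeval_eq_zero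
      (Polynomial.X_pow_sub_one_separable_iff.mpr hζ.neZero'.out).squarefree ?_
    simp [hU]
  have hint : DirectSum.IsInternal fun k : ZMod p => U.eigenspace (ζ ^ k.val) := by
    rw [DirectSum.isInternal_submodule_iff_iSupIndep_and_iSup_eq_top]
    refine ⟨U.eigenspaces_iSupIndep.comp hζ.pow_val_injective, ?_⟩
    rw [eq_top_iff, ← hss.iSup_eigenspace_eq_top]
    refine iSup_le fun μ => ?_
    rcases eq_or_ne (U.eigenspace μ) ⊥ with hμ | hμ
    · simp [hμ]
    obtain ⟨v, hv⟩ := HasEigenvalue.exists_hasEigenvector hμ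
    have hμp : μ ^ p = 1 := by
      have h : μ ^ p • v = (1 : K) • v := by rw [one_smul, ← hv.pow_apply, hU, one_apply]
      exact smul_left_injective K hv.2 h
    obtain ⟨k, hk, rfl⟩ := hζ.eq_pow_of_pow_eq_one hμp
    exact le_iSup_of_le (k : ZMod p) (by rw [ZMod.val_cast_of_lt hk])
  exact ⟨_, inferInstance, hint.collectedBasis fun k => Module.finBasis K _, fun x => x.1,
    fun x => mem_eigenspace_iff.mp (hint.collectedBasis_mem _ x)⟩

theorem finrank_ker_sub_id_eq_sum_sq {W : Type*} [AddCommGroup W] [Module K W]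
    (hζ : IsPrimitiveRoot ζ p) {U U' : Module.End K V} (hU : U ^ p = 1)
    (hU'U : ∀ v, U' (U v) = v) {T : Module.End K W} (Φ : V ⊗[K] V ≃ₗ[K] W)
    (hT : T ∘ₗ Φ.toLinearMap = Φ.toLinearMap ∘ₗ TensorProduct.map U U') :
    finrank K (LinearMap.ker (T - LinearMap.id)) =
      ∑ k : ZMod p, finrank K (LinearMap.ker (U - ζ ^ k.val • LinearMap.id)) ^ 2 := by
  classical
  obtain ⟨ι, _, b, κ, hb⟩ := U.exists_basis_apply_eq_pow_smul_of_pow_eq_one hζ hU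
  have hζ0 : ζ ≠ 0 := hζ.ne_zero (NeZero.ne p)
  have hb' : ∀ i, U' (b i) = (ζ ^ (κ i).val)⁻¹ • b i := fun i => by
    rw [eq_inv_smul_iff₀ (pow_ne_zero _ hζ0), ← map_smul, ← hb, hU'U]
  have hB : ∀ z : ι × ι, T ((b.tensorProduct b).map Φ z) =
      (ζ ^ (κ z.1).val * (ζ ^ (κ z.2).val)⁻¹) • (b.tensorProduct b).map Φ z := fun z => by
    rw [Basis.map_apply, Basis.tensorProduct_apply, ← LinearEquiv.coe_toLinearMap,
      ← LinearMap.comp_apply, hT, LinearMap.comp_apply, TensorProduct.map_tmul, hb, hb',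
      TensorProduct.smul_tmul_smul, map_smul]
  rw [← one_smul K LinearMap.id, finrank_ker_sub_smul_id_of_basis _ hB]
  simp_rw [finrank_ker_sub_smul_id_of_basis b hb, mul_inv_eq_one₀ (pow_ne_zero _ hζ0),
    hζ.pow_val_injective.eq_iff]
  exact card_filter_eq_sum_sq κ

end LinearAlgebra

namespace MvPolynomial

variable {R ι : Type*} [CommRing R]

theorem pderiv_apply_of_apply_X_eq_smul {φ : MvPolynomial ι R →ₐ[R] MvPolynomial ι R}
    {μ : ι → R} (hφ : ∀ s, φ (X s) = μ s • X s) (j : ι) (g : MvPolynomial ι R) :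
    pderiv j (φ g) = μ j • φ (pderiv j g) := by
  classical
  induction g using MvPolynomial.induction_on with
  | C a => simp
  | add g h hg hh => simp [hg, hh, smul_add]
  | mul_X g s hg =>
    rcases eq_or_ne s j with rfl | h
    · simp [hφ, hg, Derivation.leibniz, smul_smul, mul_comm, add_comm]
    · simp [hφ, hg, Derivation.leibniz, h, smul_smul, mul_comm]

theorem symm_apply_X_of_apply_X_eq_smul {K : Type*} [Field K]
    {φ : MvPolynomial ι K ≃ₐ[K] MvPolynomial ι K}
    {μ : ι → K} (hφ : ∀ s, φ (X s) = μ s • X s) (hμ : ∀ s, μ s ≠ 0) (s : ι) :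
    φ.symm (X s) = (μ s)⁻¹ • X s := by
  rw [AlgEquiv.symm_apply_eq, map_smul, hφ, smul_smul, inv_mul_cancel₀ (hμ s), one_smul]

theorem pow_eq_one_of_apply_X_eq_smul {φ : MvPolynomial ι R ≃ₐ[R] MvPolynomial ι R}
    {μ : ι → R} (hφ : ∀ s, φ (X s) = μ s • X s) {m : ℕ} (hμ : ∀ s, μ s ^ m = 1) :
    φ ^ m = 1 := by
  have hpow : ∀ k s, (φ ^ k) (X s) = μ s ^ k • X s := fun k s => by
    induction k with
    | zero => simp
    | succ k ih => rw [pow_succ', AlgEquiv.mul_apply, ih, map_smul, hφ, smul_smul, pow_succ]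
  exact AlgEquiv.coe_toAlgHom_injective (algHom_ext fun s => by simp [hpow, hμ])

theorem apply_rename_of_apply_X {σ τ : Type*} {e : σ → τ}
    {φ : MvPolynomial τ R →ₐ[R] MvPolynomial τ R} {ψ : MvPolynomial σ R →ₐ[R] MvPolynomial σ R}
    (h : ∀ i, φ (X (e i)) = rename e (ψ (X i))) (g : MvPolynomial σ R) :
    φ (rename e g) = rename e (ψ g) :=
  DFunLike.congr_fun
    (algHom_ext (f := φ.comp (rename e)) (g := (rename e).comp ψ) fun i => by simpa using h i) g

theorem pderiv_rename_eq_zero {σ τ : Type*} {e : σ → τ} {j : τ} (hj : j ∉ Set.range e)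
    (p : MvPolynomial σ R) : pderiv j (rename e p) = 0 := by
  classical
  refine pderiv_eq_zero_of_notMem_vars fun hmem => hj ?_
  obtain ⟨i, -, rfl⟩ := Finset.mem_image.mp (vars_rename e p hmem)
  exact Set.mem_range_self i

end MvPolynomial

theorem jacobianIdeal_le_comap {ι : Type*} {φ : MvPolynomial ι ℂ →ₐ[ℂ] MvPolynomial ι ℂ} {μ : ι → ℂ}
    (hφ : ∀ s, φ (X s) = μ s • X s) (hμ : ∀ s, μ s ≠ 0) {f : MvPolynomial ι ℂ} (hf : φ f = f) :
    jacobianIdeal f ≤ (jacobianIdeal f).comap φ := by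
  refine Ideal.span_le.mpr ?_
  rintro _ ⟨j, rfl⟩
  have h := pderiv_apply_of_apply_X_eq_smul hφ j f
  rw [hf, eq_comm, ← eq_inv_smul_iff₀ (hμ j)] at h
  rw [SetLike.mem_coe, Ideal.mem_comap, h]
  exact Submodule.smul_of_tower_mem _ _ (Ideal.subset_span ⟨j, rfl⟩)

theorem jacobianIdeal_rename_inl_add_rename_inr {σ τ : Type*} (f : MvPolynomial σ ℂ)
    (g : MvPolynomial τ ℂ) :
    jacobianIdeal (rename Sum.inl f + rename Sum.inr g) =
      (jacobianIdeal f).map (rename Sum.inl) ⊔ (jacobianIdeal g).map (rename Sum.inr) := by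
  have hpderiv : (fun j => pderiv j (rename Sum.inl f + rename Sum.inr g)) =
      Sum.elim (fun i => rename Sum.inl (pderiv i f)) (fun i => rename Sum.inr (pderiv i g)) := by
    ext1 (i | i)
    · simp [pderiv_rename Sum.inl_injective, pderiv_rename_eq_zero]
    · simp [pderiv_rename Sum.inr_injective, pderiv_rename_eq_zero]
  rw [jacobianIdeal, hpderiv, Set.Sum.elim_range, Ideal.span_union, jacobianIdeal, jacobianIdeal,
    Ideal.map_span, Ideal.map_span, ← Set.range_comp, ← Set.range_comp]
  rfl

namespace MvPolynomial

variable {R σ τ : Type*} [CommRing R] (I : Ideal (MvPolynomial σ R))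
  (J : Ideal (MvPolynomial τ R))

noncomputable def sumToTensorQuotient :
    MvPolynomial (σ ⊕ τ) R →ₐ[R] (MvPolynomial σ R ⧸ I) ⊗[R] (MvPolynomial τ R ⧸ J) :=
  aeval <| Sum.elim (fun i => Ideal.Quotient.mk I (X i) ⊗ₜ[R] 1)
    fun i => 1 ⊗ₜ[R] Ideal.Quotient.mk J (X i)

theorem le_ker_sumToTensorQuotient :
    I.map (rename Sum.inl) ⊔ J.map (rename Sum.inr) ≤ RingHom.ker (sumToTensorQuotient I J) := by
  have hinl : (sumToTensorQuotient I J).comp (rename Sum.inl) =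
      Algebra.TensorProduct.includeLeft.comp (Ideal.Quotient.mkₐ R I) := by
    ext; simp [sumToTensorQuotient]
  have hinr : (sumToTensorQuotient I J).comp (rename Sum.inr) =
      Algebra.TensorProduct.includeRight.comp (Ideal.Quotient.mkₐ R J) := by
    ext; simp [sumToTensorQuotient]
  refine sup_le (Ideal.map_le_iff_le_comap.mpr fun a ha => ?_)
    (Ideal.map_le_iff_le_comap.mpr fun a ha => ?_)
  · simp [← AlgHom.comp_apply, hinl, Ideal.Quotient.eq_zero_iff_mem.mpr ha]
  · simp [← AlgHom.comp_apply, hinr, Ideal.Quotient.eq_zero_iff_mem.mpr ha]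

noncomputable def quotientTensorQuotientAlgEquiv :
    (MvPolynomial σ R ⧸ I) ⊗[R] (MvPolynomial τ R ⧸ J) ≃ₐ[R]
      MvPolynomial (σ ⊕ τ) R ⧸ (I.map (rename Sum.inl) ⊔ J.map (rename Sum.inr)) :=
  AlgEquiv.ofAlgHom
    (Algebra.TensorProduct.lift
      (Ideal.quotientMapₐ _ (rename Sum.inl) (Ideal.map_le_iff_le_comap.mp le_sup_left))
      (Ideal.quotientMapₐ _ (rename Sum.inr) (Ideal.map_le_iff_le_comap.mp le_sup_right))
      fun _ _ => Commute.all _ _)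
    (Ideal.Quotient.liftₐ _ _ fun _ ha =>
      RingHom.mem_ker.mp (le_ker_sumToTensorQuotient I J ha))
    (Ideal.Quotient.algHom_ext _ <| by
      ext (i | i) <;> (simp [Ideal.Quotient.liftₐ_apply]; simp [sumToTensorQuotient]))
    (Algebra.TensorProduct.ext
      (Ideal.Quotient.algHom_ext _ <| by
        ext; simp [Ideal.Quotient.liftₐ_apply]; simp [sumToTensorQuotient])
      (Ideal.Quotient.algHom_ext _ <| by
        ext; simp [Ideal.Quotient.liftₐ_apply]; simp [sumToTensorQuotient]))

theorem quotientTensorQuotientAlgEquiv_tmul (a : MvPolynomial σ R) (b : MvPolynomial τ R) :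
    quotientTensorQuotientAlgEquiv I J (Ideal.Quotient.mk I a ⊗ₜ Ideal.Quotient.mk J b) =
      Ideal.Quotient.mk _ (rename Sum.inl a * rename Sum.inr b) := by
  simp [quotientTensorQuotientAlgEquiv]

end MvPolynomial

theorem Ideal.Quotient.pow_apply_mk {R A : Type*} [CommRing R] [CommRing A] [Algebra R A]
    {I : Ideal A} {φ : A ≃ₐ[R] A} {T : Module.End R (A ⧸ I)}
    (hT : ∀ q, T (Ideal.Quotient.mk I q) = Ideal.Quotient.mk I (φ q)) (m : ℕ) (q : A) :
    (T ^ m) (Ideal.Quotient.mk I q) = Ideal.Quotient.mk I ((φ ^ m) q) := by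
  rw [Module.End.pow_apply, AlgEquiv.coe_pow]
  exact ((Function.Semiconj.iterate_right (fun q => (hT q).symm) m) q).symm

theorem finrank_ker_sub_id_quotient_sum_eq_sum_sq {K ι : Type*} [Field K] [IsAlgClosed K] {p : ℕ}
    [NeZero p] {ζ : K} (hζ : IsPrimitiveRoot ζ p) {I : Ideal (MvPolynomial ι K)}
    [FiniteDimensional K (MvPolynomial ι K ⧸ I)] {σ : MvPolynomial ι K ≃ₐ[K] MvPolynomial ι K}
    (hσp : σ ^ p = 1) {σbar : Module.End K (MvPolynomial ι K ⧸ I)}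
    (hσbar : ∀ q, σbar (Ideal.Quotient.mk I q) = Ideal.Quotient.mk I (σ q))
    {J : Ideal (MvPolynomial (ι ⊕ ι) K)} (hJ : J = I.map (rename Sum.inl) ⊔ I.map (rename Sum.inr))
    {τ : MvPolynomial (ι ⊕ ι) K ≃ₐ[K] MvPolynomial (ι ⊕ ι) K}
    (hτinl : ∀ g, τ (rename Sum.inl g) = rename Sum.inl (σ g))
    (hτinr : ∀ g, τ (rename Sum.inr g) = rename Sum.inr (σ.symm g))
    {τbar : Module.End K (MvPolynomial (ι ⊕ ι) K ⧸ J)}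
    (hτbar : ∀ q, τbar (Ideal.Quotient.mk J q) = Ideal.Quotient.mk J (τ q)) :
    finrank K (LinearMap.ker (τbar - LinearMap.id)) =
      ∑ k : ZMod p, finrank K (LinearMap.ker (σbar - ζ ^ k.val • LinearMap.id)) ^ 2 := by
  have hσsymm : σ ^ (p - 1) = σ.symm :=
    eq_inv_of_mul_eq_one_left (by rw [pow_sub_one_mul (NeZero.ne p), hσp])
  have hσbarp : σbar ^ p = 1 := LinearMap.ext fun v => by
    obtain ⟨q, rfl⟩ := Ideal.Quotient.mk_surjective v
    rw [Ideal.Quotient.pow_apply_mk hσbar, hσp, AlgEquiv.one_apply, Module.End.one_apply]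
  let Φ := (quotientTensorQuotientAlgEquiv I I).trans (Ideal.quotientEquivAlgOfEq K hJ.symm)
  have hΦ : ∀ a c, Φ (Ideal.Quotient.mk I a ⊗ₜ Ideal.Quotient.mk I c) =
      Ideal.Quotient.mk J (rename Sum.inl a * rename Sum.inr c) := fun a c => by
    simp [Φ, quotientTensorQuotientAlgEquiv_tmul]
  refine finrank_ker_sub_id_eq_sum_sq hζ hσbarp (U' := σbar ^ (p - 1)) (fun v => ?_)
    Φ.toLinearEquiv (TensorProduct.ext' fun x y => ?_)
  · rw [← Module.End.mul_apply, ← pow_succ, Nat.sub_add_cancel NeZero.one_le, hσbarp,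
      Module.End.one_apply]
  · obtain ⟨a, rfl⟩ := Ideal.Quotient.mk_surjective x
    obtain ⟨c, rfl⟩ := Ideal.Quotient.mk_surjective y
    change τbar (Φ _) = Φ (TensorProduct.map σbar (σbar ^ (p - 1)) _)
    rw [TensorProduct.map_tmul, hσbar, Ideal.Quotient.pow_apply_mk hσbar, hσsymm, hΦ, hΦ, hτbar,
      map_mul, hτinl, hτinr]

/-- Let `σ` be the diagonal `ℤ_p`-action with weights `w` on the polynomial ring, `f` a
`σ`-invariant polynomial with finite-dimensional Jacobian algebra, `σ̄` the induced
linear automorphism of `Q_f`, and `τ` the doubled action on `2n` variables (scaling the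
`x`-variables by `ζ^{wᵢ}` and the `y`-variables by `ζ^{-wᵢ}`). Then `τ` fixes
`F = f ⊕ f`, preserves `J_F`, and for the induced map `τ̄` on `Q_F`, the dimension of
the fixed subspace of `τ̄` equals `Σ_{k ∈ ZMod p} (dim ker(σ̄ − ζ^k·id))²`. -/
theorem fixed_dim_of_doubling {n p : ℕ} [hp : Fact p.Prime] (ζ : ℂ)
    (hζ : IsPrimitiveRoot ζ p) (w : Fin n → ZMod p)
    (σ : MvPolynomial (Fin n) ℂ ≃ₐ[ℂ] MvPolynomial (Fin n) ℂ)
    (hσ : ∀ i, σ (X i) = ζ ^ (w i).val • X i)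
    (f : MvPolynomial (Fin n) ℂ) (hf : σ f = f)
    (hfd : FiniteDimensional ℂ (MvPolynomial (Fin n) ℂ ⧸ jacobianIdeal f))
    (σbar : (MvPolynomial (Fin n) ℂ ⧸ jacobianIdeal f) →ₗ[ℂ]
      (MvPolynomial (Fin n) ℂ ⧸ jacobianIdeal f))
    (hσbar : ∀ q, σbar (Ideal.Quotient.mk (jacobianIdeal f) q) =
      Ideal.Quotient.mk (jacobianIdeal f) (σ q))
    (τ : MvPolynomial (Fin n ⊕ Fin n) ℂ ≃ₐ[ℂ] MvPolynomial (Fin n ⊕ Fin n) ℂ)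
    (hτl : ∀ i, τ (X (Sum.inl i)) = ζ ^ (w i).val • X (Sum.inl i))
    (hτr : ∀ i, τ (X (Sum.inr i)) = ζ ^ (-(w i)).val • X (Sum.inr i)) :
    τ (doubling f) = doubling f ∧
    (∀ g ∈ jacobianIdeal (doubling f), τ g ∈ jacobianIdeal (doubling f)) ∧
    ∀ τbar : (MvPolynomial (Fin n ⊕ Fin n) ℂ ⧸ jacobianIdeal (doubling f)) →ₗ[ℂ]
        (MvPolynomial (Fin n ⊕ Fin n) ℂ ⧸ jacobianIdeal (doubling f)),
      (∀ q, τbar (Ideal.Quotient.mk (jacobianIdeal (doubling f)) q) =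
        Ideal.Quotient.mk (jacobianIdeal (doubling f)) (τ q)) →
      Module.finrank ℂ (LinearMap.ker (τbar - LinearMap.id)) =
        ∑ k : ZMod p,
          (Module.finrank ℂ (LinearMap.ker (σbar - ζ ^ k.val • LinearMap.id))) ^ 2 := by
  have hζ0 : ζ ≠ 0 := hζ.ne_zero hp.out.ne_zero
  have hσsymm := symm_apply_X_of_apply_X_eq_smul hσ fun i => pow_ne_zero _ hζ0
  have hτinl : ∀ g, τ (rename Sum.inl g) = rename Sum.inl (σ g) :=
    apply_rename_of_apply_X (φ := τ.toAlgHom) (ψ := σ.toAlgHom) fun i => by simp [hτl, hσ]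
  have hτinr : ∀ g, τ (rename Sum.inr g) = rename Sum.inr (σ.symm g) :=
    apply_rename_of_apply_X (φ := τ.toAlgHom) (ψ := σ.symm.toAlgHom) fun i => by
      simp [hτr, hσsymm, hζ.pow_neg_val]
  have hτF : τ (doubling f) = doubling f := by
    rw [doubling, map_add, hτinl, hτinr, hf, σ.symm_apply_eq.mpr hf.symm]
  have hτX : ∀ s, τ (X s) =
      Sum.elim (fun i => ζ ^ (w i).val) (fun i => ζ ^ (-w i).val) s • X s := by
    rintro (i | i)
    exacts [hτl i, hτr i]
  have hσp : σ ^ p = 1 := pow_eq_one_of_apply_X_eq_smul hσ fun i => by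
    rw [← pow_mul, mul_comm, pow_mul, hζ.pow_eq_one, one_pow]
  refine ⟨hτF, fun g hg => jacobianIdeal_le_comap (φ := τ.toAlgHom) hτX
    (by rintro (i | i) <;> exact pow_ne_zero _ hζ0) hτF hg, fun τbar hτbar => ?_⟩
  exact finrank_ker_sub_id_quotient_sum_eq_sum_sq hζ hσp hσbar
    (jacobianIdeal_rename_inl_add_rename_inr f f) hτinl hτinr hτbar
end

section
/- Let f be a polynomial in n variables over ℂ (n ≥ 1) lying in the cube m³ of the maximal ideal m = (X₁, …, Xₙ) (i.e. f has no terms of degree ≤ 2), and suppose the Jacobian algebra Q_f is a finite-dimensional ℂ-vector space. Then dim_ℂ Q_f ≥ 2ⁿ. -/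
open MvPolynomial

/-!
Let `J = (∂f/∂x₁, …, ∂f/∂xₙ)` and `L = dim Q_f`, and choose a complement `E` of `J`, so that
`dim E = L`. Substituting `E + J` for the polynomial ring repeatedly, every polynomial is congruent
modulo `J^(d+1)` to an element of `(1 + N)^d · E`, where `N` is spanned by the partials; that space
has dimension at most `C(n+d, d) · L`. Since the partials lie in `m²`, `J^(d+1) ⊆ m^(2d+2)` meets
the polynomials of degree `≤ 2d+1`, a space of dimension `C(n+2d+1, n)`, only in `0`. Hence
`C(n+2d+1, n) ≤ C(n+d, n) · L` for every `d`, and the ratio of these binomial coefficients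
tends to `2ⁿ`.
-/

open Module

namespace Submodule

variable {R A : Type*} [CommSemiring R]

theorem top_le_one_sup_pow_mul_sup [Semiring A] [Algebra R A] {E N : Submodule R A}
    (h : ⊤ ≤ E ⊔ N * ⊤) (d : ℕ) : ⊤ ≤ (1 ⊔ N) ^ d * E ⊔ N ^ (d + 1) * ⊤ := by
  induction d with
  | zero => simpa using h
  | succ d ih =>
    calc ⊤ ≤ (1 ⊔ N) ^ d * E ⊔ N ^ (d + 1) * ⊤ := ih
      _ ≤ (1 ⊔ N) ^ d * E ⊔ N ^ (d + 1) * (E ⊔ N * ⊤) := by gcongr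
      _ = ((1 ⊔ N) ^ d * E ⊔ N ^ (d + 1) * E) ⊔ N ^ (d + 2) * ⊤ := by
        rw [mul_sup, pow_succ N (d + 1), mul_assoc, sup_assoc]
      _ ≤ (1 ⊔ N) ^ (d + 1) * E ⊔ N ^ (d + 2) * ⊤ := by
        gcongr
        exact sup_le (by gcongr; exacts [le_sup_left, d.le_succ]) (by gcongr; exact le_sup_right)

theorem pow_mul_top_le_restrictScalars [CommSemiring A] [Algebra R A] {N : Submodule R A}
    {I : Ideal A} (h : N ≤ I.restrictScalars R) (k : ℕ) :
    N ^ k * ⊤ ≤ (I ^ k).restrictScalars R := by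
  induction k with
  | zero => simp
  | succ k ih =>
    rw [pow_succ', mul_assoc, pow_succ' I k, Ideal.restrictScalars_mul]
    exact mul_le_mul' h ih

theorem _root_.Ideal.restrictScalars_span_le_span_mul_top [CommSemiring A] [Algebra R A]
    (s : Set A) : (Ideal.span s).restrictScalars R ≤ span R s * ⊤ := by
  intro x hx
  induction hx using Submodule.span_induction with
  | mem y hy => simpa using mul_mem_mul (subset_span hy) (mem_top (x := (1 : A)))
  | zero => exact zero_mem _
  | add x y _ _ hx hy => exact add_mem hx hy
  | smul a x _ hx =>
    have hle : ⊤ * (span R s * ⊤) ≤ span R s * ⊤ := by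
      rw [mul_left_comm]
      gcongr
      exact le_top
    exact hle (mul_mem_mul mem_top hx)

theorem finrank_mul_le {K : Type*} [Field K] [Ring A] [Algebra K A] (M N : Submodule K A)
    [FiniteDimensional K M] [FiniteDimensional K N] :
    finrank K ↥(M * N) ≤ finrank K M * finrank K N := by
  rw [← mulMap_range, ← finrank_tensorProduct]
  exact LinearMap.finrank_range_le _

theorem finrank_le_of_le_sup_of_disjoint {K V : Type*} [Field K] [AddCommGroup V] [Module K V]
    {M W I : Submodule K V} [FiniteDimensional K W] (hle : M ≤ W ⊔ I) (hdisj : Disjoint M I) :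
    finrank K M ≤ finrank K W := by
  have hinj : Function.Injective (I.mkQ ∘ₗ M.subtype) := by
    rw [← LinearMap.ker_eq_bot, LinearMap.ker_comp, ker_mkQ, ← disjoint_iff_comap_eq_bot]
    exact hdisj
  calc finrank K M = finrank K ↥(M.map I.mkQ) := by
        rw [← LinearMap.finrank_range_of_inj hinj, LinearMap.range_comp, range_subtype]
    _ ≤ finrank K ↥(W.map I.mkQ) := by
        apply finrank_mono
        simpa [map_sup] using map_mono (f := I.mkQ) hle
    _ ≤ finrank K W := finrank_map_le _ _

end Submodule

theorem Derivation.apply_mem_pow_of_mem_pow_succ {R A : Type*} [CommSemiring R] [CommRing A]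
    [Algebra R A] (D : Derivation R A A) {I : Ideal A} {k : ℕ} {a : A} (ha : a ∈ I ^ (k + 1)) :
    D a ∈ I ^ k := by
  induction k generalizing a with
  | zero => simp
  | succ k ih =>
    rw [pow_succ] at ha
    refine Submodule.mul_induction_on ha (fun x hx y hy => ?_) (fun x y hx hy => ?_)
    · rw [D.leibniz, smul_eq_mul, smul_eq_mul]
      refine add_mem (Ideal.mul_mem_right _ _ hx) ?_
      rw [pow_succ']
      exact Ideal.mul_mem_mul hy (ih hx)
    · rw [map_add]
      exact add_mem hx hy

namespace Finsupp

theorem degree_eq_apply_none_add_degree_some {σ : Type*} (P : Option σ →₀ ℕ) :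
    P.degree = P none + P.some.degree :=
  P.sum_option_index (fun _ e => e) (fun _ => rfl) fun _ _ _ => rfl

/-- Homogenization of exponents, the extra variable being `none`. -/
noncomputable def degreeLeEquivOption (σ : Type*) (k : ℕ) :
    {α : σ →₀ ℕ // α.degree ≤ k} ≃ {P : Option σ →₀ ℕ // P.degree = k} where
  toFun α := ⟨α.1.optionElim (k - α.1.degree), by
    rw [degree_eq_apply_none_add_degree_some, some_optionElim, optionElim_apply_none]
    exact Nat.sub_add_cancel α.2⟩
  invFun P := ⟨P.1.some, by have := degree_eq_apply_none_add_degree_some P.1; omega⟩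
  left_inv α := Subtype.ext (some_optionElim _ _)
  right_inv P := by
    have hnone : k - P.1.some.degree = P.1 none := by
      have := degree_eq_apply_none_add_degree_some P.1; omega
    exact Subtype.ext (by simp only [hnone, optionElim_some])

end Finsupp

namespace MvPolynomial

theorem finrank_restrictTotalDegree (σ K : Type*) [Fintype σ] [Field K] (k : ℕ) :
    finrank K (restrictTotalDegree σ K k) = (Fintype.card σ + k).choose k := by
  classical
  rw [restrictTotalDegree, finrank_eq_nat_card_basis (basisRestrictSupport K _)]
  calc Nat.card _ = Nat.card (Sym (Option σ) k) :=
        Nat.card_congr ((Finsupp.degreeLeEquivOption σ k).trans (Sym.equivNatSum _ k).symm)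
    _ = (Fintype.card σ + k).choose k := by
        rw [Nat.card_eq_fintype_card, Sym.card_sym_eq_choose, Fintype.card_option,
          Nat.add_right_comm, Nat.add_sub_cancel]

variable {R σ : Type*} [CommSemiring R]

theorem restrictTotalDegree_mul_le (a b : ℕ) :
    restrictTotalDegree σ R a * restrictTotalDegree σ R b ≤ restrictTotalDegree σ R (a + b) := by
  refine Submodule.mul_le.mpr fun p hp q hq => ?_
  rw [mem_restrictTotalDegree] at hp hq ⊢
  exact (totalDegree_mul p q).trans (add_le_add hp hq)

theorem one_sup_span_range_X_pow_le_restrictTotalDegree (d : ℕ) :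
    (1 ⊔ Submodule.span R (Set.range (X : σ → MvPolynomial σ R))) ^ d ≤
      restrictTotalDegree σ R d := by
  have hone (k : ℕ) : (1 : Submodule R (MvPolynomial σ R)) ≤ restrictTotalDegree σ R k := by
    simp [Submodule.one_le, mem_restrictTotalDegree]
  have hX : Submodule.span R (Set.range (X : σ → MvPolynomial σ R)) ≤
      restrictTotalDegree σ R 1 := by
    refine Submodule.span_le.mpr (Set.range_subset_iff.mpr fun i => ?_)
    simpa [mem_restrictTotalDegree, X] using totalDegree_monomial_le (Finsupp.single i 1) (1 : R)
  induction d with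
  | zero => simpa using hone 0
  | succ d ih =>
    rw [pow_succ]
    exact (mul_le_mul' ih (sup_le (hone 1) hX)).trans (restrictTotalDegree_mul_le d 1)

theorem one_sup_span_range_pow_le_map_restrictTotalDegree {A : Type*} [CommSemiring A]
    [Algebra R A] (g : σ → A) (d : ℕ) :
    (1 ⊔ Submodule.span R (Set.range g)) ^ d ≤
      (restrictTotalDegree σ R d).map (aeval g).toLinearMap := by
  have hg : 1 ⊔ Submodule.span R (Set.range g) =
      (1 ⊔ Submodule.span R (Set.range X)).map (aeval g).toLinearMap := by
    rw [Submodule.map_sup, Submodule.map_one, Submodule.map_span, ← Set.range_comp]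
    congr
    ext i
    simp
  rw [hg, ← Submodule.map_pow]
  exact Submodule.map_mono (one_sup_span_range_X_pow_le_restrictTotalDegree d)

theorem disjoint_restrictTotalDegree_pow_idealOfVars (k : ℕ) :
    Disjoint (restrictTotalDegree σ R k) ((idealOfVars σ R ^ (k + 1)).restrictScalars R) := by
  refine Submodule.disjoint_def.mpr fun p hp hpm => ?_
  rw [mem_restrictTotalDegree] at hp
  rw [Submodule.restrictScalars_mem, mem_pow_idealOfVars_iff] at hpm
  refine support_eq_empty.mp (Finset.eq_empty_of_forall_notMem fun x hx => ?_)
  have hle := le_totalDegree hx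
  have hge : k + 1 ≤ x.sum fun _ e => e := hpm x hx
  omega

open Submodule in
theorem choose_le_choose_mul_finrank_quotient {K ι : Type*} [Field K] [Fintype σ] [Fintype ι]
    (g : ι → MvPolynomial σ K) (hg : ∀ i, g i ∈ idealOfVars σ K ^ 2)
    [FiniteDimensional K (MvPolynomial σ K ⧸ Ideal.span (Set.range g))] (d : ℕ) :
    (Fintype.card σ + (2 * d + 1)).choose (2 * d + 1) ≤
      (Fintype.card ι + d).choose d * finrank K (MvPolynomial σ K ⧸ Ideal.span (Set.range g)) := by
  set J := Ideal.span (Set.range g)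
  set N := span K (Set.range g)
  obtain ⟨E, hE⟩ := (J.restrictScalars K).exists_isCompl
  have eE : (MvPolynomial σ K ⧸ J) ≃ₗ[K] E :=
    (Quotient.restrictScalarsEquiv K J).symm ≪≫ₗ quotientEquivOfIsCompl _ _ hE
  have : FiniteDimensional K E := eE.finiteDimensional
  have hpow : (1 ⊔ N) ^ d ≤ (restrictTotalDegree ι K d).map (aeval g).toLinearMap :=
    one_sup_span_range_pow_le_map_restrictTotalDegree g d
  have : FiniteDimensional K ↥((1 ⊔ N) ^ d) := finiteDimensional_of_le hpow
  have : FiniteDimensional K ↥((1 ⊔ N) ^ d * E) := by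
    rw [← mulMap_range]
    infer_instance
  have hcover : ⊤ ≤ (1 ⊔ N) ^ d * E ⊔ (idealOfVars σ K ^ (2 * d + 1 + 1)).restrictScalars K := by
    have hJE : ⊤ ≤ E ⊔ N * ⊤ := hE.sup_eq_top.ge.trans <| by
      rw [sup_comm]
      exact sup_le_sup_left (Ideal.restrictScalars_span_le_span_mul_top (R := K) (Set.range g)) _
    have hN : N ≤ (idealOfVars σ K ^ 2).restrictScalars K :=
      span_le.mpr (Set.range_subset_iff.mpr hg)
    refine (top_le_one_sup_pow_mul_sup hJE d).trans (sup_le_sup_left ?_ _)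
    rw [show 2 * d + 1 + 1 = 2 * (d + 1) by ring, pow_mul]
    exact pow_mul_top_le_restrictScalars hN (d + 1)
  calc (Fintype.card σ + (2 * d + 1)).choose (2 * d + 1)
      = finrank K (restrictTotalDegree σ K (2 * d + 1)) := (finrank_restrictTotalDegree ..).symm
    _ ≤ finrank K ↥((1 ⊔ N) ^ d * E) :=
        finrank_le_of_le_sup_of_disjoint (le_top.trans hcover)
          (disjoint_restrictTotalDegree_pow_idealOfVars _)
    _ ≤ finrank K ↥((1 ⊔ N) ^ d) * finrank K E := finrank_mul_le _ _
    _ ≤ (Fintype.card ι + d).choose d * finrank K (MvPolynomial σ K ⧸ J) := by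
        rw [eE.finrank_eq, ← finrank_restrictTotalDegree ι K d]
        gcongr
        exact (finrank_mono hpow).trans (finrank_map_le _ _)

end MvPolynomial

open Filter Topology in
theorem Nat.two_pow_le_of_forall_choose_le {n L : ℕ}
    (h : ∀ d, (n + (2 * d + 1)).choose n ≤ (n + d).choose n * L) : 2 ^ n ≤ L := by
  have hbound : ∀ᶠ d : ℕ in atTop, ((2 + 2 * d : ℝ) / (n + d)) ^ n ≤ L := by
    filter_upwards [eventually_ge_atTop 1] with d hd
    have hlow := Nat.pow_le_choose (α := ℝ) n (n + (2 * d + 1))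
    rw [show n + (2 * d + 1) + 1 - n = 2 + 2 * d by omega] at hlow
    have hup := Nat.choose_le_pow_div (α := ℝ) n (n + d)
    have hmul : ((n + (2 * d + 1)).choose n : ℝ) ≤ (n + d).choose n * L := by exact_mod_cast h d
    push_cast at hlow hup
    rw [div_pow, div_le_iff₀ (by positivity)]
    calc (2 + 2 * d : ℝ) ^ n = n.factorial * ((2 + 2 * d : ℝ) ^ n / n.factorial) := by
          field_simp
      _ ≤ n.factorial * ((n + d : ℝ) ^ n / n.factorial * L) := by
          gcongr
          exact hlow.trans (hmul.trans (by gcongr))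
      _ = L * (n + d) ^ n := by
          field_simp
  have hlim : Tendsto (fun d : ℕ => ((2 + 2 * d : ℝ) / (n + d)) ^ n) atTop (𝓝 (2 ^ n)) := by
    simpa using (tendsto_add_mul_div_add_mul_atTop_nhds (2 : ℝ) n 2 one_ne_zero).pow n
  exact_mod_cast le_of_tendsto hlim hbound

theorem milnor_ge_two_pow_general {n : ℕ} (f : MvPolynomial (Fin n) ℂ)
    (hf : f ∈ (Ideal.span (Set.range (X : Fin n → MvPolynomial (Fin n) ℂ))) ^ 3)
    (hfd : FiniteDimensional ℂ (MvPolynomial (Fin n) ℂ ⧸ jacobianIdeal f)) :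
    2 ^ n ≤ Module.finrank ℂ (MvPolynomial (Fin n) ℂ ⧸ jacobianIdeal f) := by
  unfold jacobianIdeal at hfd ⊢
  have hg (i : Fin n) : pderiv i f ∈ idealOfVars (Fin n) ℂ ^ 2 :=
    (pderiv i).apply_mem_pow_of_mem_pow_succ hf
  refine Nat.two_pow_le_of_forall_choose_le fun d => ?_
  rw [Nat.choose_symm_add, Nat.choose_symm_add]
  simpa only [Fintype.card_fin] using choose_le_choose_mul_finrank_quotient _ hg d

/-- If `f` lies in the cube of the maximal ideal `m = (X₁, …, Xₙ)` (no terms of degree `≤ 2`)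
and its Jacobian algebra is finite-dimensional, then `dim_ℂ Q_f ≥ 2ⁿ`. -/
theorem milnor_ge_two_pow {n : ℕ} (hn : 1 ≤ n) (f : MvPolynomial (Fin n) ℂ)
    (hf : f ∈ (Ideal.span (Set.range (X : Fin n → MvPolynomial (Fin n) ℂ))) ^ 3)
    (hfd : FiniteDimensional ℂ (MvPolynomial (Fin n) ℂ ⧸ jacobianIdeal f)) :
    2 ^ n ≤ Module.finrank ℂ (MvPolynomial (Fin n) ℂ ⧸ jacobianIdeal f) :=
  milnor_ge_two_pow_general f hf hfd
end

section
/- Let I be an ideal of MvPolynomial (Fin n) ℂ such that the quotient ℂ-algebra MvPolynomial (Fin n) ℂ / I is finite-dimensional over ℂ. Then there exists a finite family of monomials whose residues modulo I form a ℂ-basis of the quotient (i.e. the quotient admits a monomial basis). -/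
open MvPolynomial

theorem Module.Basis.exists_fin_comp_of_span_eq_top {K V ι : Type*} [DivisionRing K]
    [AddCommGroup V] [Module K V] [Module.Finite K V] (v : ι → V)
    (hv : Submodule.span K (Set.range v) = ⊤) :
    ∃ (μ : ℕ) (e : Fin μ → ι) (b : Module.Basis (Fin μ) K V), ∀ i, b i = v (e i) := by
  obtain ⟨κ, a, -, hspan, hli⟩ := exists_linearIndependent' K v
  let b : Module.Basis κ K V := .mk hli (by rw [hspan, hv])
  have : Finite κ := Module.Finite.finite_basis b
  let eκ := Finite.equivFin κ
  exact ⟨Nat.card κ, a ∘ eκ.symm, b.reindex eκ, fun i => by simp [b]⟩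

theorem MvPolynomial.span_range_mk_monomial_eq_top {σ R : Type*} [CommRing R]
    (I : Ideal (MvPolynomial σ R)) :
    Submodule.span R (Set.range fun d : σ →₀ ℕ => Ideal.Quotient.mk I (monomial d 1)) = ⊤ := by
  have hsurj := (Ideal.Quotient.mkₐ R I).toLinearMap.range_eq_top.2 Ideal.Quotient.mk_surjective
  rw [← hsurj, LinearMap.range_eq_map, ← (basisMonomials σ R).span_eq, Submodule.map_span,
    ← Set.range_comp, coe_basisMonomials]
  rfl

/-- If the quotient of `MvPolynomial (Fin n) ℂ` by an ideal `I` is finite-dimensional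
over `ℂ`, then the quotient admits a monomial basis: there are finitely many monomials
whose residues modulo `I` form a `ℂ`-basis of the quotient. -/
theorem exists_monomial_basis {n : ℕ} (I : Ideal (MvPolynomial (Fin n) ℂ))
    (hfd : FiniteDimensional ℂ (MvPolynomial (Fin n) ℂ ⧸ I)) :
    ∃ (μ : ℕ) (p : Fin μ → MvPolynomial (Fin n) ℂ),
      (∀ i, ∃ d : Fin n →₀ ℕ, p i = monomial d 1) ∧
      ∃ b : Module.Basis (Fin μ) ℂ (MvPolynomial (Fin n) ℂ ⧸ I),
        ∀ i, b i = Ideal.Quotient.mk I (p i) := by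
  obtain ⟨μ, e, b, hb⟩ :=
    Module.Basis.exists_fin_comp_of_span_eq_top _ (span_range_mk_monomial_eq_top I)
  exact ⟨μ, fun i => monomial (e i) 1, fun i => ⟨e i, rfl⟩, b, hb⟩
end

section
/- Let h be a polynomial in m variables over ℂ, and let f be the polynomial in k + m variables given by f = X₁² + … + X_k² + h(X_{k+1}, …, X_{k+m}) (formally, f = Σ_{i : Fin k} (X (Sum.inl i))² + rename Sum.inr h in MvPolynomial (Fin k ⊕ Fin m) ℂ). Then the Jacobian algebra Q_f is isomorphic as a ℂ-algebra to the Jacobian algebra Q_h; in particular dim_ℂ Q_f = dim_ℂ Q_h. -/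
open MvPolynomial

lemma aux_sub_mem {k m : ℕ} (p : MvPolynomial (Fin k ⊕ Fin m) ℂ) :
    p - rename (Sum.inr : Fin m → Fin k ⊕ Fin m)
        (aeval (Sum.elim (fun _ => 0) X) p) ∈
      Ideal.span (Set.range fun j : Fin k => (X (Sum.inl j) : MvPolynomial (Fin k ⊕ Fin m) ℂ)) := by
  set I := Ideal.span (Set.range fun j : Fin k =>
    (X (Sum.inl j) : MvPolynomial (Fin k ⊕ Fin m) ℂ))
  induction p using MvPolynomial.induction_on with
  | C a => simp [I]
  | add p q hp hq =>
    rw [map_add, map_add, add_sub_add_comm]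
    exact I.add_mem hp hq
  | mul_X p n hp =>
    cases n with
    | inl j =>
      have hX : (X (Sum.inl j) : MvPolynomial (Fin k ⊕ Fin m) ℂ) ∈ I :=
        Ideal.subset_span ⟨j, rfl⟩
      have : aeval (Sum.elim (fun _ => (0 : MvPolynomial (Fin m) ℂ)) X)
          (p * X (Sum.inl j)) = 0 := by simp
      rw [this, map_zero, sub_zero]
      exact I.mul_mem_left p hX
    | inr j =>
      have : p * X (Sum.inr j) - rename (Sum.inr : Fin m → Fin k ⊕ Fin m)
          (aeval (Sum.elim (fun _ => 0) X) (p * X (Sum.inr j))) =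
          (p - rename (Sum.inr : Fin m → Fin k ⊕ Fin m)
            (aeval (Sum.elim (fun _ => 0) X) p)) * X (Sum.inr j) := by
        simp [sub_mul]
      rw [this]
      exact I.mul_mem_right _ hp

/-- For `f = X₁² + … + X_k² + h(X_{k+1}, …, X_{k+m})`, the Jacobian algebra `Q_f` is
isomorphic as a `ℂ`-algebra to the Jacobian algebra `Q_h`; in particular their
`ℂ`-dimensions agree. -/
theorem jacobian_algebra_splitting {k m : ℕ} (h : MvPolynomial (Fin m) ℂ)
    (f : MvPolynomial (Fin k ⊕ Fin m) ℂ)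
    (hf : f = (∑ i : Fin k, X (Sum.inl i) ^ 2) +
      rename (Sum.inr : Fin m → Fin k ⊕ Fin m) h) :
    Nonempty ((MvPolynomial (Fin k ⊕ Fin m) ℂ ⧸ jacobianIdeal f) ≃ₐ[ℂ]
        (MvPolynomial (Fin m) ℂ ⧸ jacobianIdeal h)) ∧
    Module.finrank ℂ (MvPolynomial (Fin k ⊕ Fin m) ℂ ⧸ jacobianIdeal f) =
      Module.finrank ℂ (MvPolynomial (Fin m) ℂ ⧸ jacobianIdeal h) := by
  -- the substitution map
  set ψ : MvPolynomial (Fin k ⊕ Fin m) ℂ →ₐ[ℂ] MvPolynomial (Fin m) ℂ :=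
    aeval (Sum.elim (fun _ => 0) X) with hψ
  set φ : MvPolynomial (Fin k ⊕ Fin m) ℂ →ₐ[ℂ] MvPolynomial (Fin m) ℂ ⧸ jacobianIdeal h :=
    (Ideal.Quotient.mkₐ ℂ (jacobianIdeal h)).comp ψ with hφ
  have hψrename : ∀ q : MvPolynomial (Fin m) ℂ,
      ψ (rename (Sum.inr : Fin m → Fin k ⊕ Fin m) q) = q := by
    intro q
    rw [hψ, aeval_rename]
    simp only [Function.comp_def, Sum.elim_inr]
    exact aeval_X_left_apply q
  -- derivatives of f
  have hpderiv_inl : ∀ j : Fin k, pderiv (Sum.inl j) f = 2 * X (Sum.inl j) := by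
    intro j
    rw [hf, map_add]
    have h1 : pderiv (Sum.inl j) (rename (Sum.inr : Fin m → Fin k ⊕ Fin m) h) = 0 := by
      apply pderiv_eq_zero_of_notMem_vars
      intro hmem
      have := vars_rename (Sum.inr : Fin m → Fin k ⊕ Fin m) h hmem
      simp at this
    rw [h1, add_zero, map_sum]
    rw [Finset.sum_eq_single j]
    · rw [pderiv_pow, pderiv_X_self]; ring
    · intro b _ hb
      rw [pderiv_pow, pderiv_X_of_ne (fun hc => hb (by injection hc))]
      ring
    · simp
  have hpderiv_inr : ∀ j : Fin m, pderiv (Sum.inr j) f =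
      rename (Sum.inr : Fin m → Fin k ⊕ Fin m) (pderiv j h) := by
    intro j
    rw [hf, map_add]
    have h1 : pderiv (Sum.inr j) (∑ i : Fin k, (X (Sum.inl i) : MvPolynomial (Fin k ⊕ Fin m) ℂ) ^ 2) = 0 := by
      rw [map_sum]
      apply Finset.sum_eq_zero
      intro b _
      rw [pderiv_pow, pderiv_X_of_ne (by simp)]
      ring
    rw [h1, zero_add, pderiv_rename Sum.inr_injective]
  -- span of the X (inl j)
  set I : Ideal (MvPolynomial (Fin k ⊕ Fin m) ℂ) := Ideal.span (Set.range fun j : Fin k =>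
    (X (Sum.inl j) : MvPolynomial (Fin k ⊕ Fin m) ℂ)) with hI
  have hIJ : I ≤ jacobianIdeal f := by
    rw [hI, Ideal.span_le]
    rintro _ ⟨j, rfl⟩
    have hthis : (X (Sum.inl j) : MvPolynomial (Fin k ⊕ Fin m) ℂ) =
        C (1/2 : ℂ) * pderiv (Sum.inl j) f := by
      rw [hpderiv_inl j, (map_ofNat (C : ℂ →+* MvPolynomial (Fin k ⊕ Fin m) ℂ) 2).symm,
        ← mul_assoc, ← C_mul]
      norm_num
    show (X (Sum.inl j) : MvPolynomial (Fin k ⊕ Fin m) ℂ) ∈ jacobianIdeal f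
    rw [hthis]
    exact Ideal.mul_mem_left _ _ (Ideal.subset_span ⟨Sum.inl j, rfl⟩)
  have hmapJ : Ideal.map ((rename (Sum.inr : Fin m → Fin k ⊕ Fin m) :
      MvPolynomial (Fin m) ℂ →ₐ[ℂ] MvPolynomial (Fin k ⊕ Fin m) ℂ)).toRingHom (jacobianIdeal h) ≤
      jacobianIdeal f := by
    rw [Ideal.map_le_iff_le_comap]
    rw [jacobianIdeal, Ideal.span_le]
    rintro _ ⟨j, rfl⟩
    show rename (Sum.inr : Fin m → Fin k ⊕ Fin m) (pderiv j h) ∈ jacobianIdeal f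
    rw [← hpderiv_inr j]
    exact Ideal.subset_span ⟨Sum.inr j, rfl⟩
  -- kernel of φ
  have hker : RingHom.ker φ.toRingHom = jacobianIdeal f := by
    apply le_antisymm
    · intro p hp
      have hψp : ψ p ∈ jacobianIdeal h := by
        rw [← Ideal.Quotient.eq_zero_iff_mem]
        exact hp
      have h1 : rename (Sum.inr : Fin m → Fin k ⊕ Fin m) (ψ p) ∈ jacobianIdeal f :=
        hmapJ (Ideal.mem_map_of_mem _ hψp)
      have h2 : p - rename (Sum.inr : Fin m → Fin k ⊕ Fin m) (ψ p) ∈ jacobianIdeal f :=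
        hIJ (aux_sub_mem p)
      simpa using add_mem h2 h1
    · rw [jacobianIdeal, Ideal.span_le]
      rintro _ ⟨i, rfl⟩
      rw [SetLike.mem_coe, RingHom.mem_ker]
      cases i with
      | inl j =>
        show φ (pderiv (Sum.inl j) f) = 0
        rw [hpderiv_inl j, hφ]
        simp [hψ]
      | inr j =>
        show φ (pderiv (Sum.inr j) f) = 0
        rw [hpderiv_inr j, hφ]
        simp only [AlgHom.comp_apply, hψrename]
        rw [Ideal.Quotient.mkₐ_eq_mk, Ideal.Quotient.eq_zero_iff_mem]
        exact Ideal.subset_span ⟨j, rfl⟩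
  have hsurj : Function.Surjective φ := by
    intro q
    obtain ⟨q, rfl⟩ := Ideal.Quotient.mk_surjective q
    exact ⟨rename (Sum.inr : Fin m → Fin k ⊕ Fin m) q, by
      rw [hφ]; simp only [AlgHom.comp_apply, hψrename]; rfl⟩
  have e : (MvPolynomial (Fin k ⊕ Fin m) ℂ ⧸ jacobianIdeal f) ≃ₐ[ℂ]
      (MvPolynomial (Fin m) ℂ ⧸ jacobianIdeal h) := by
    have e1 := Ideal.quotientKerAlgEquivOfSurjective (f := φ) hsurj
    have e2 : (MvPolynomial (Fin k ⊕ Fin m) ℂ ⧸ jacobianIdeal f) ≃ₐ[ℂ]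
        (MvPolynomial (Fin k ⊕ Fin m) ℂ ⧸ RingHom.ker φ.toRingHom) :=
      Ideal.quotientEquivAlgOfEq ℂ hker.symm
    exact e2.trans e1
  exact ⟨⟨e⟩, e.toLinearEquiv.finrank_eq⟩
end

section
/- Let G be a finite group acting linearly on ℂⁿ via a representation ρ : G → GL(n, ℂ), and let v, w ∈ ℂⁿ be points whose G-orbits are disjoint. Then there exists a G-invariant polynomial P ∈ MvPolynomial (Fin n) ℂ (i.e. P(ρ(g)⁻¹ x) = P(x) for all g ∈ G) such that P takes the value 1 at every point of the orbit of v and the value 0 at every point of the orbit of w. -/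
open MvPolynomial

theorem exists_point_sep {n : ℕ} (x y : Fin n → ℂ) :
    ∃ q : MvPolynomial (Fin n) ℂ, x ≠ y → eval x q = 1 ∧ eval y q = 0 := by
  by_cases h : x = y
  · exact ⟨1, fun hne => absurd h hne⟩
  · obtain ⟨i, hi⟩ := Function.ne_iff.mp h
    refine ⟨C (x i - y i)⁻¹ * (X i - C (y i)), fun _ => ⟨?_, ?_⟩⟩
    · simp [inv_mul_cancel₀ (sub_ne_zero.mpr hi)]
    · simp

theorem exists_sep_poly {n : ℕ} (S T : Finset (Fin n → ℂ)) (h : Disjoint S T) :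
    ∃ Q : MvPolynomial (Fin n) ℂ,
      (∀ a ∈ S, eval a Q = 1) ∧ (∀ b ∈ T, eval b Q = 0) := by
  choose q hq using fun x y => exists_point_sep (n := n) x y
  refine ⟨∑ a ∈ S, ∏ b ∈ (S ∪ T).erase a, q a b, ?_, ?_⟩
  · intro c hc
    rw [map_sum, Finset.sum_eq_single c]
    · rw [map_prod]
      apply Finset.prod_eq_one
      intro b hb
      have hbc : c ≠ b := (Finset.ne_of_mem_erase hb).symm
      exact (hq c b hbc).1
    · intro a ha hac
      rw [map_prod]
      apply Finset.prod_eq_zero (i := c)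
      · exact Finset.mem_erase.mpr ⟨Ne.symm hac, Finset.mem_union_left _ hc⟩
      · exact (hq a c hac).2
    · intro hcs; exact absurd hc hcs
  · intro c hc
    rw [map_sum]
    apply Finset.sum_eq_zero
    intro a ha
    rw [map_prod]
    apply Finset.prod_eq_zero (i := c)
    · refine Finset.mem_erase.mpr ⟨?_, Finset.mem_union_right _ hc⟩
      intro e; exact (Finset.disjoint_left.mp h ha) (e ▸ hc)
    · refine (hq a c ?_).2
      intro e; exact (Finset.disjoint_left.mp h ha) (e ▸ hc)

theorem eval_subst' {n : ℕ} (M : Matrix (Fin n) (Fin n) ℂ) (x : Fin n → ℂ) (Q : MvPolynomial (Fin n) ℂ) :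
    eval x (aeval (fun i => ∑ j, C (M i j) * X j) Q) = eval (M.mulVec x) Q := by
  have h1 : ∀ (f : Fin n → ℂ) (p : MvPolynomial (Fin n) ℂ), aeval f p = eval f p := fun f p =>
    RingHom.congr_fun (coe_aeval_eq_eval f) p
  rw [← h1, ← h1, comp_aeval_apply]
  have feq : (fun i => aeval x (∑ j, C (M i j) * X j)) = M.mulVec x := by
    funext i
    simp [Matrix.mulVec, dotProduct]
  rw [feq]




/-- Separating property of invariants of a finite group action: if `G` is a finite group
acting linearly on `ℂⁿ` via `ρ : G → GL(n, ℂ)` and `v, w` have disjoint orbits, then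
there is a `G`-invariant polynomial equal to `1` on the orbit of `v` and `0` on the
orbit of `w`. -/
theorem separating_invariant {n : ℕ} {G : Type*} [Group G] [Fintype G]
    (ρ : G →* Matrix.GeneralLinearGroup (Fin n) ℂ) (v w : Fin n → ℂ)
    (hdisj : ∀ g g' : G,
      (ρ g : Matrix (Fin n) (Fin n) ℂ).mulVec v ≠
        (ρ g' : Matrix (Fin n) (Fin n) ℂ).mulVec w) :
    ∃ P : MvPolynomial (Fin n) ℂ,
      (∀ (g : G) (x : Fin n → ℂ),
        eval (((ρ g)⁻¹ : Matrix (Fin n) (Fin n) ℂ).mulVec x) P = eval x P) ∧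
      (∀ g : G, eval ((ρ g : Matrix (Fin n) (Fin n) ℂ).mulVec v) P = 1) ∧
      (∀ g : G, eval ((ρ g : Matrix (Fin n) (Fin n) ℂ).mulVec w) P = 0) := by
  classical
  set S : Finset (Fin n → ℂ) :=
    Finset.univ.image (fun g : G => (ρ g : Matrix (Fin n) (Fin n) ℂ).mulVec v) with hS
  set T : Finset (Fin n → ℂ) :=
    Finset.univ.image (fun g : G => (ρ g : Matrix (Fin n) (Fin n) ℂ).mulVec w) with hT
  have hST : Disjoint S T := by
    rw [Finset.disjoint_left]
    rintro a ha hb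
    simp only [hS, hT, Finset.mem_image, Finset.mem_univ, true_and] at ha hb
    obtain ⟨g, hg⟩ := ha
    obtain ⟨g', hg'⟩ := hb
    exact hdisj g g' (hg.trans hg'.symm)
  obtain ⟨Q, hQ1, hQ0⟩ := exists_sep_poly S T hST
  set c : ℂ := ((Fintype.card G : ℂ))⁻¹ with hc
  refine ⟨C c * ∑ h : G, aeval (fun i => ∑ j, C ((ρ h : Matrix (Fin n) (Fin n) ℂ) i j) * X j) Q,
    ?_, ?_, ?_⟩
  · intro g x
    simp only [map_mul, eval_C, map_sum, eval_subst', Matrix.mulVec_mulVec]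
    congr 1
    have key : ((ρ g : Matrix (Fin n) (Fin n) ℂ))⁻¹ = (ρ g⁻¹ : Matrix (Fin n) (Fin n) ℂ) := by
      rw [← Matrix.coe_units_inv, ← map_inv]
    rw [key]
    refine Fintype.sum_equiv (Equiv.mulRight g⁻¹) _ _ (fun h => ?_)
    have hm : (ρ h : Matrix (Fin n) (Fin n) ℂ) * (ρ g⁻¹ : Matrix (Fin n) (Fin n) ℂ)
        = (ρ (h * g⁻¹) : Matrix (Fin n) (Fin n) ℂ) := by rw [map_mul]; rfl
    rw [hm]
    rfl
  · intro g
    simp only [map_mul, eval_C, map_sum, eval_subst', Matrix.mulVec_mulVec]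
    have : ∀ h : G, eval (((ρ h : Matrix (Fin n) (Fin n) ℂ) * (ρ g : Matrix (Fin n) (Fin n) ℂ)).mulVec v) Q = 1 := by
      intro h
      have hm : ((ρ h : Matrix (Fin n) (Fin n) ℂ) * (ρ g : Matrix (Fin n) (Fin n) ℂ)) = (ρ (h * g) : Matrix (Fin n) (Fin n) ℂ) := by
        rw [map_mul]; rfl
      rw [hm]
      exact hQ1 _ (Finset.mem_image.mpr ⟨h * g, Finset.mem_univ _, rfl⟩)
    rw [Finset.sum_congr rfl (fun h _ => this h), Finset.sum_const, Finset.card_univ, nsmul_eq_mul, mul_one]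
    rw [hc, inv_mul_cancel₀]
    exact_mod_cast Fintype.card_ne_zero
  · intro g
    simp only [map_mul, eval_C, map_sum, eval_subst', Matrix.mulVec_mulVec]
    have : ∀ h : G, eval (((ρ h : Matrix (Fin n) (Fin n) ℂ) * (ρ g : Matrix (Fin n) (Fin n) ℂ)).mulVec w) Q = 0 := by
      intro h
      have hm : ((ρ h : Matrix (Fin n) (Fin n) ℂ) * (ρ g : Matrix (Fin n) (Fin n) ℂ)) = (ρ (h * g) : Matrix (Fin n) (Fin n) ℂ) := by
        rw [map_mul]; rfl
      rw [hm]
      exact hQ0 _ (Finset.mem_image.mpr ⟨h * g, Finset.mem_univ _, rfl⟩)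
    rw [Finset.sum_congr rfl (fun h _ => this h), Finset.sum_const]
    simp
end

section
/- Let p be a prime, ζ ∈ ℂ a primitive p-th root of unity, w : Fin n → ZMod p, and consider the diagonal ℤ_p-action on ℂⁿ scaling the i-th coordinate by ζ^{wᵢ}. Let Q be a quadratic form on ℂⁿ invariant under this action whose rank is maximal among all invariant quadratic forms. Then no nonzero vector fixed by the action lies in the radical of Q (the kernel of the associated bilinear form); equivalently, every invariant vector in the radical of Q is zero. -/
open MvPolynomial

/-- Let `Q` be a quadratic form on `ℂⁿ` invariant under the diagonal `ℤ_p`-action with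
weights `w` (the group element `m` scales the `i`-th coordinate by `ζ^{m·wᵢ}`), of
maximal rank among invariant quadratic forms. Then every vector fixed by the action
which lies in the radical of `Q` (the kernel of its polar bilinear form) is zero. -/
theorem no_fixed_vector_in_radical {n p : ℕ} [hp : Fact p.Prime] (ζ : ℂ)
    (hζ : IsPrimitiveRoot ζ p) (w : Fin n → ZMod p)
    (Q : QuadraticForm ℂ (Fin n → ℂ))
    (hinv : ∀ (m : ZMod p) (x : Fin n → ℂ),
      Q (fun i => ζ ^ (m * w i).val * x i) = Q x)
    (hmax : ∀ Q' : QuadraticForm ℂ (Fin n → ℂ),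
      (∀ (m : ZMod p) (x : Fin n → ℂ),
        Q' (fun i => ζ ^ (m * w i).val * x i) = Q' x) →
      Module.finrank ℂ (LinearMap.range (QuadraticMap.polarBilin Q')) ≤
        Module.finrank ℂ (LinearMap.range (QuadraticMap.polarBilin Q))) :
    ∀ v : Fin n → ℂ,
      (∀ m : ZMod p, (fun i => ζ ^ (m * w i).val * v i) = v) →
      QuadraticMap.polarBilin Q v = 0 → v = 0 := by
  intro v hfix hrad
  by_contra hv
  obtain ⟨i0, hi0⟩ : ∃ i, v i ≠ 0 := by
    by_contra h; push_neg at h; exact hv (funext h)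
  -- the weight at i0 is zero
  have hw : (w i0).val = 0 := by
    have h1 := congrFun (hfix 1) i0
    simp only [one_mul] at h1
    have hz : ζ ^ (w i0).val = 1 := by
      have := mul_right_cancel₀ hi0 (h1.trans (one_mul (v i0)).symm)
      exact this
    have hdvd : p ∣ (w i0).val := (hζ.pow_eq_one_iff_dvd _).mp hz
    exact Nat.eq_zero_of_dvd_of_lt hdvd (ZMod.val_lt _)
  -- auxiliary quadratic form x ↦ (x i0)^2 and the perturbed form
  set P : QuadraticForm ℂ (Fin n → ℂ) := QuadraticMap.proj i0 i0 with hP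
  have hPapp : ∀ x : Fin n → ℂ, P x = x i0 * x i0 := fun x => rfl
  have hPinv : ∀ (m : ZMod p) (x : Fin n → ℂ),
      P (fun i => ζ ^ (m * w i).val * x i) = P x := by
    intro m x
    have : (m * w i0).val = 0 := by
      have : w i0 = 0 := by
        have := ZMod.val_eq_zero (w i0); rw [this] at hw; simp [hw]
      simp [this]
    simp [hPapp, this]
  set Q' : QuadraticForm ℂ (Fin n → ℂ) := Q + P with hQ'
  have hQ'inv : ∀ (m : ZMod p) (x : Fin n → ℂ),
      Q' (fun i => ζ ^ (m * w i).val * x i) = Q' x := by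
    intro m x
    simp only [hQ', QuadraticMap.add_apply]
    rw [hinv, hPinv]
  set B := QuadraticMap.polarBilin Q with hB
  set B' := QuadraticMap.polarBilin Q' with hB'
  -- polar of P
  have hpolarP : ∀ x y : Fin n → ℂ,
      QuadraticMap.polar P x y = 2 * x i0 * y i0 := by
    intro x y
    simp only [QuadraticMap.polar, hPapp, Pi.add_apply]
    ring
  have hB'xy : ∀ x y : Fin n → ℂ, B' x y = B x y + 2 * x i0 * y i0 := by
    intro x y
    simp only [hB', hB, QuadraticMap.polarBilin_apply_apply, hQ', QuadraticMap.polar,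
      QuadraticMap.add_apply, hPapp, Pi.add_apply]
    ring
  have hBv : ∀ y, B v y = 0 := fun y => by rw [hrad]; rfl
  -- range B ≤ range B'
  have hle : LinearMap.range B ≤ LinearMap.range B' := by
    rintro f ⟨x, rfl⟩
    refine ⟨x - (x i0 / v i0) • v, ?_⟩
    refine LinearMap.ext fun y => ?_
    simp only [map_sub, map_smul, LinearMap.sub_apply, LinearMap.smul_apply,
      smul_eq_mul]
    rw [hB'xy, hB'xy]
    rw [hBv]
    field_simp
    ring
  -- strict: B' v ∈ range B' but not in range B
  have hmem : B' v ∉ LinearMap.range B := by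
    rintro ⟨x, hx⟩
    have h1 : B x v = B' v v := by rw [hx]
    have h2 : B x v = B v x := by
      simp only [hB, QuadraticMap.polarBilin_apply_apply]
      exact QuadraticMap.polar_comm _ _ _
    rw [h2, hBv] at h1
    rw [hB'xy, hBv] at h1
    have : (2 : ℂ) * v i0 * v i0 = 0 := by rw [zero_add] at h1; exact h1.symm
    exact hi0 (by
      rcases mul_eq_zero.mp this with h | h
      · rcases mul_eq_zero.mp h with h | h
        · exact absurd h two_ne_zero
        · exact h
      · exact h)
  have hlt : LinearMap.range B < LinearMap.range B' :=
    lt_of_le_of_ne hle (fun h => hmem (h ▸ LinearMap.mem_range_self B' v))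
  have h3 := Submodule.finrank_lt_finrank_of_lt hlt
  have h2 := hmax Q' hQ'inv
  rw [← hB'] at h2
  omega
end
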